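/- arXiv:1501.05476 — 5 statements merged into one kernel-verified Lean document; each statement's English description precedes it below -/
import Mathlib

section
/- Let (G,P) be a quasi-lattice ordered group and ω a directed hereditary subset of G containing some element of P. Suppose q ∈ P satisfies q ∨ p < ∞ for all p ∈ ω, and suppose ω is maximal among directed hereditary subsets of G. Then q ∈ ω. -/
variable {G : Type*} [Group G]

/-- The left-invariant relation `g ≤ h ↔ g⁻¹h ∈ P` on `G`. -/
def qle (P : Set G) (g h : G) : Prop := g⁻¹ * h ∈ P

/-- `m` is the least upper bound of `g` and `h` for the order `qle P`. -/
def qlub (P : Set G) (g h m : G) : Prop :=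
  qle P g m ∧ qle P h m ∧ ∀ u, qle P g u → qle P h u → qle P m u

/-- `(G, P)` is a quasi-lattice ordered group: `P` is a subsemigroup with
`P ∩ P⁻¹ = {e}`, and any two elements with a common upper bound have a least one. -/
def IsQLO (P : Set G) : Prop :=
  (∀ a ∈ P, ∀ b ∈ P, a * b ∈ P) ∧ (1 : G) ∈ P ∧
  (∀ a ∈ P, a⁻¹ ∈ P → a = 1) ∧
  (∀ g h : G, (∃ u, qle P g u ∧ qle P h u) → ∃ m, qlub P g h m)

/-- `ω` is directed: any two elements have a least upper bound lying in `ω`. -/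
def QDirected (P : Set G) (ω : Set G) : Prop :=
  ∀ g ∈ ω, ∀ h ∈ ω, ∃ m ∈ ω, qlub P g h m

/-- `ω` is hereditary: downward closed for `qle P`. -/
def QHereditary (P : Set G) (ω : Set G) : Prop :=
  ∀ g h : G, h ∈ ω → qle P g h → g ∈ ω

/-- if `ω` is a maximal directed hereditary set meeting `P` and `q ∈ P`
has `q ∨ p < ∞` for all `p ∈ ω`, then `q ∈ ω`. -/
theorem stmt8 (P : Set G) (hQ : IsQLO P) (ω : Set G)
    (hd : QDirected P ω) (hh : QHereditary P ω) (hP : (ω ∩ P).Nonempty)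
    (hmax : ∀ ρ : Set G, QDirected P ρ → QHereditary P ρ → ω ⊆ ρ → ω = ρ)
    (q : G) (hq : q ∈ P) (hub : ∀ p ∈ ω, ∃ m, qlub P q p m) :
    q ∈ ω := by
  obtain ⟨hPmul, hP1, hPinv, hQlat⟩ := hQ
  have refl : ∀ g : G, qle P g g := fun g => by simp [qle, hP1]
  have trans : ∀ {a b c : G}, qle P a b → qle P b c → qle P a c := by
    intro a b c hab hbc
    have := hPmul _ hab _ hbc
    simpa [qle, mul_assoc] using this
  set ρ : Set G := {g | ∃ p ∈ ω, ∃ m, qlub P q p m ∧ qle P g m} with hρ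
  have hsub : ω ⊆ ρ := by
    intro p hp
    obtain ⟨m, hm⟩ := hub p hp
    exact ⟨p, hp, m, hm, hm.2.1⟩
  have hqρ : q ∈ ρ := by
    obtain ⟨p₀, hp₀, _⟩ := hP
    obtain ⟨m, hm⟩ := hub p₀ hp₀
    exact ⟨p₀, hp₀, m, hm, hm.1⟩
  have hher : QHereditary P ρ := by
    rintro g h ⟨p, hp, m, hm, hgm⟩ hgh
    exact ⟨p, hp, m, hm, trans hgh hgm⟩
  have hdir : QDirected P ρ := by
    rintro g₁ ⟨p₁, hp₁, m₁, hm₁, hg₁⟩ g₂ ⟨p₂, hp₂, m₂, hm₂, hg₂⟩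
    obtain ⟨p, hp, hpl⟩ := hd p₁ hp₁ p₂ hp₂
    obtain ⟨m, hm⟩ := hub p hp
    have hm₁m : qle P m₁ m := hm₁.2.2 m hm.1 (trans hpl.1 hm.2.1)
    have hm₂m : qle P m₂ m := hm₂.2.2 m hm.1 (trans hpl.2.1 hm.2.1)
    obtain ⟨n, hn⟩ := hQlat g₁ g₂ ⟨m, trans hg₁ hm₁m, trans hg₂ hm₂m⟩
    exact ⟨n, ⟨p, hp, m, hm, hn.2.2 m (trans hg₁ hm₁m) (trans hg₂ hm₂m)⟩, hn⟩
  have := hmax ρ hdir hher hsub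
  rw [this]
  exact hqρ
end

section
/- Let (G,P) be a quasi-lattice ordered group and ω a directed hereditary subset of G. If q ∈ P satisfies q ∨ p < ∞ for all p ∈ ω, then the set q ∨ ω = {q ∨ p : p ∈ ω} is directed, and its hereditary closure Her(q ∨ ω) = {g ∈ G : g ≤ q ∨ p for some p ∈ ω} is a directed hereditary subset of G containing both ω and q. -/
variable {G : Type*} [Group G]

lemma qle_refl (P : Set G) (h1 : (1:G) ∈ P) (g : G) : qle P g g := by
  simpa [qle] using h1

lemma qle_trans (P : Set G) (hmul : ∀ a ∈ P, ∀ b ∈ P, a * b ∈ P)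
    {g h k : G} (h1 : qle P g h) (h2 : qle P h k) : qle P g k := by
  have := hmul _ h1 _ h2
  simpa [qle, mul_assoc] using this

/-- `q ∨ ω` is directed and its hereditary closure is a directed
hereditary set containing `ω` and `q`. -/
theorem stmt9 (P : Set G) (hQ : IsQLO P) (ω : Set G) (hne : ω.Nonempty)
    (hd : QDirected P ω) (hh : QHereditary P ω)
    (q : G) (hq : q ∈ P) (hub : ∀ p ∈ ω, ∃ m, qlub P q p m) :
    QDirected P {m | ∃ p ∈ ω, qlub P q p m} ∧
    QDirected P {g | ∃ p ∈ ω, ∃ m, qlub P q p m ∧ qle P g m} ∧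
    QHereditary P {g | ∃ p ∈ ω, ∃ m, qlub P q p m ∧ qle P g m} ∧
    ω ⊆ {g | ∃ p ∈ ω, ∃ m, qlub P q p m ∧ qle P g m} ∧
    q ∈ {g | ∃ p ∈ ω, ∃ m, qlub P q p m ∧ qle P g m} := by
  obtain ⟨hmul, h1, _, hex⟩ := hQ
  have trans := fun {g h k : G} => qle_trans P hmul (g := g) (h := h) (k := k)
  -- key: for m₁ = q∨p₁, m₂ = q∨p₂, there is p ∈ ω and m = q∨p with
  -- qlub m₁ m₂ m
  have key : ∀ p₁ ∈ ω, ∀ p₂ ∈ ω, ∀ m₁ m₂, qlub P q p₁ m₁ → qlub P q p₂ m₂ →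
      ∃ p ∈ ω, ∃ m, qlub P q p m ∧ qlub P m₁ m₂ m := by
    intro p₁ hp₁ p₂ hp₂ m₁ m₂ hm₁ hm₂
    obtain ⟨p, hp, hpl⟩ := hd p₁ hp₁ p₂ hp₂
    obtain ⟨m, hm⟩ := hub p hp
    refine ⟨p, hp, m, hm, ?_, ?_, ?_⟩
    · exact hm₁.2.2 m hm.1 (trans hpl.1 hm.2.1)
    · exact hm₂.2.2 m hm.1 (trans hpl.2.1 hm.2.1)
    · intro u hu₁ hu₂
      exact hm.2.2 u (trans hm₁.1 hu₁)
        (hpl.2.2 u (trans hm₁.2.1 hu₁) (trans hm₂.2.1 hu₂))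
  refine ⟨?_, ?_, ?_, ?_, ?_⟩
  · rintro m₁ ⟨p₁, hp₁, hm₁⟩ m₂ ⟨p₂, hp₂, hm₂⟩
    obtain ⟨p, hp, m, hm, hlub⟩ := key p₁ hp₁ p₂ hp₂ m₁ m₂ hm₁ hm₂
    exact ⟨m, ⟨p, hp, hm⟩, hlub⟩
  · rintro g₁ ⟨p₁, hp₁, m₁, hm₁, hg₁⟩ g₂ ⟨p₂, hp₂, m₂, hm₂, hg₂⟩
    obtain ⟨p, hp, m, hm, hlub⟩ := key p₁ hp₁ p₂ hp₂ m₁ m₂ hm₁ hm₂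
    obtain ⟨n, hn⟩ := hex g₁ g₂ ⟨m, trans hg₁ hlub.1, trans hg₂ hlub.2.1⟩
    exact ⟨n, ⟨p, hp, m, hm, hn.2.2 m (trans hg₁ hlub.1) (trans hg₂ hlub.2.1)⟩, hn⟩
  · rintro g h ⟨p, hp, m, hm, hgm⟩ hgh
    exact ⟨p, hp, m, hm, trans hgh hgm⟩
  · intro p hp
    obtain ⟨m, hm⟩ := hub p hp
    exact ⟨p, hp, m, hm, hm.2.1⟩
  · obtain ⟨p, hp⟩ := hne
    obtain ⟨m, hm⟩ := hub p hp
    exact ⟨p, hp, m, hm, hm.1⟩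
end

section
/- Let (G,P) be a quasi-lattice ordered group, and let ω be a directed hereditary subset of G. For g ∈ G such that e ∨ g⁻¹ exists and lies in ω, the set [e ∨ g⁻¹, ω) = {q ∈ ω : e ∨ g⁻¹ ≤ q} equals {p ∈ P ∩ ω : gp ∈ P}, and this set is directed under the order of P (any two elements have an upper bound in the set). -/
variable {G : Type*} [Group G]

/-- `[e ∨ g⁻¹, ω) = {p ∈ P ∩ ω : gp ∈ P}`, and this set is directed. -/
theorem stmt10 (P : Set G) (hQ : IsQLO P) (ω : Set G)
    (hd : QDirected P ω) (hh : QHereditary P ω)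
    (g m : G) (hm : qlub P 1 g⁻¹ m) (hmω : m ∈ ω) :
    {q | q ∈ ω ∧ qle P m q} = {p | p ∈ P ∧ p ∈ ω ∧ g * p ∈ P} ∧
    ∀ a ∈ {q | q ∈ ω ∧ qle P m q}, ∀ b ∈ {q | q ∈ ω ∧ qle P m q},
      ∃ c ∈ {q | q ∈ ω ∧ qle P m q}, qle P a c ∧ qle P b c := by
  obtain ⟨hmul, hone, -, -⟩ := hQ
  obtain ⟨h1m, hgm, hlub⟩ := hm
  have trans : ∀ x y z : G, qle P x y → qle P y z → qle P x z := by
    intro x y z h1 h2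
    have := hmul _ h1 _ h2
    simpa [qle, mul_assoc] using this
  constructor
  · ext q
    simp only [Set.mem_setOf_eq]
    constructor
    · rintro ⟨hqω, hmq⟩
      have hq1 : qle P 1 q := trans _ _ _ h1m hmq
      have hgq : qle P g⁻¹ q := trans _ _ _ hgm hmq
      refine ⟨by simpa [qle] using hq1, hqω, by simpa [qle] using hgq⟩
    · rintro ⟨hqP, hqω, hgq⟩
      exact ⟨hqω, hlub q (by simpa [qle] using hqP) (by simpa [qle] using hgq)⟩
  · rintro a ⟨haω, hma⟩ b ⟨hbω, hmb⟩
    obtain ⟨c, hcω, hac, hbc, -⟩ := hd a haω b hbω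
    exact ⟨c, ⟨hcω, trans _ _ _ hma hac⟩, hac, hbc⟩
end

section
/- Let (G,P) be a quasi-lattice ordered group. Define 𝒢 = {(g,ω) : ω ∈ Ω, ω ∩ P ≠ ∅, (gω) ∩ P ≠ ∅}, where Ω is the set of directed hereditary subsets of G and gω = {gh : h ∈ ω}. With composable pairs ((g, hω), (h, ω)), multiplication (g,hω)(h,ω) = (gh,ω), and inversion (g,ω)⁻¹ = (g⁻¹, gω), 𝒢 is a groupoid with unit space {e} × {ω ∈ Ω : ω ∩ P ≠ ∅}, range map r(g,ω) = (e, gω) and source map s(g,ω) = (e,ω). -/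
variable {G : Type*} [Group G]

/-- `𝒢 = {(g, ω) : ω ∩ P ≠ ∅, (gω) ∩ P ≠ ∅}` is a groupoid under
`(g, hω)(h, ω) = (gh, ω)` and `(g, ω)⁻¹ = (g⁻¹, gω)`, with unit space
`{e} × {ω : ω ∩ P ≠ ∅}` and range and source `r(g,ω) = (e, gω)`, `s(g,ω) = (e, ω)`. -/
theorem stmt13 (P : Set G) (hQ : IsQLO P) :
    let tr : G → Set G → Set G := fun g ω => (g * ·) '' ω
    let Gpd : Set (G × Set G) :=
      {x | (QDirected P x.2 ∧ QHereditary P x.2) ∧ (x.2 ∩ P).Nonempty ∧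
        (tr x.1 x.2 ∩ P).Nonempty}
    -- closure under the partial multiplication
    (∀ g h ω, (g, tr h ω) ∈ Gpd → (h, ω) ∈ Gpd → (g * h, ω) ∈ Gpd) ∧
    -- closure under inversion
    (∀ g ω, (g, ω) ∈ Gpd → (g⁻¹, tr g ω) ∈ Gpd) ∧
    -- range and source of an element lie in the unit space
    (∀ g ω, (g, ω) ∈ Gpd → ((1 : G), tr g ω) ∈ Gpd ∧ ((1 : G), ω) ∈ Gpd) ∧
    -- inverses compose to units, units act as identities, multiplication is associative
    (∀ g ω, tr g⁻¹ (tr g ω) = ω) ∧ (∀ ω, tr (1 : G) ω = ω) ∧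
    (∀ g h ω, tr (g * h) ω = tr g (tr h ω)) := by
  intro tr Gpd
  have hqle : ∀ (g a b : G), qle P (g * a) (g * b) ↔ qle P a b := by
    intro g a b; unfold qle; rw [mul_inv_rev, mul_assoc, inv_mul_cancel_left]
  have hinv : ∀ g ω, tr g⁻¹ (tr g ω) = ω := by
    intro g ω
    ext x
    simp only [tr, Set.mem_image]
    constructor
    · rintro ⟨y, ⟨z, hz, rfl⟩, rfl⟩; simpa using hz
    · intro hx; exact ⟨g * x, ⟨x, hx, rfl⟩, by group⟩
  have hone : ∀ ω, tr (1 : G) ω = ω := by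
    intro ω; ext x; simp [tr]
  have hmul : ∀ g h ω, tr (g * h) ω = tr g (tr h ω) := by
    intro g h ω; ext x
    simp only [tr, Set.mem_image]
    constructor
    · rintro ⟨y, hy, rfl⟩; exact ⟨h * y, ⟨y, hy, rfl⟩, by group⟩
    · rintro ⟨y, ⟨z, hz, rfl⟩, rfl⟩; exact ⟨z, hz, by group⟩
  have hDH : ∀ g ω, QDirected P ω → QHereditary P ω →
      QDirected P (tr g ω) ∧ QHereditary P (tr g ω) := by
    intro g ω hD hH
    constructor
    · rintro a ⟨a', ha', rfl⟩ b ⟨b', hb', rfl⟩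
      obtain ⟨m, hm, h1, h2, h3⟩ := hD a' ha' b' hb'
      refine ⟨g * m, ⟨m, hm, rfl⟩, (hqle g _ _).2 h1, (hqle g _ _).2 h2, ?_⟩
      intro u hu1 hu2
      have := h3 (g⁻¹ * u) (by rw [← hqle g, mul_inv_cancel_left]; exact hu1)
        (by rw [← hqle g, mul_inv_cancel_left]; exact hu2)
      rw [← hqle g, mul_inv_cancel_left] at this; exact this
    · rintro a b ⟨b', hb', rfl⟩ hab
      refine ⟨g⁻¹ * a, hH _ b' hb' ?_, by group⟩
      rw [← hqle g, mul_inv_cancel_left]; exact hab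
  refine ⟨?_, ?_, ?_, hinv, hone, hmul⟩
  · rintro g h ω ⟨_, _, h1⟩ ⟨hDHω, h2, _⟩
    exact ⟨hDHω, h2, by rwa [hmul]⟩
  · rintro g ω ⟨⟨hD, hH⟩, h1, h2⟩
    exact ⟨hDH g ω hD hH, h2, by rwa [hinv]⟩
  · rintro g ω ⟨⟨hD, hH⟩, h1, h2⟩
    exact ⟨⟨hDH g ω hD hH, h2, by rwa [hone]⟩, ⟨hD, hH⟩, h1, by rwa [hone]⟩
end

section
/- Let (G,P) be a quasi-lattice ordered group with G countable, let Ω be the space of directed hereditary subsets of G with the topology from {0,1}^G, let Ω_max be the maximal elements, and let ω ∈ Ω_max. Suppose (rₙ) is a sequence in ω with rₙ₊₁ ≥ rₙ and cofinal in ω, and (ωₙ) is a sequence in Ω with rₙ ∈ ωₙ for all n. Then ωₙ → ω in Ω. -/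
variable {G : Type*} [Group G]

/-- The subset of `G` corresponding to a characteristic function `f : G → Bool`. -/
def memSet (f : G → Bool) : Set G := {g | f g = true}

/-- `f : G → Bool` is the characteristic function of a directed hereditary set. -/
def IsDH (P : Set G) (f : G → Bool) : Prop :=
  QDirected P (memSet f) ∧ QHereditary P (memSet f)

/-- if `ω` is maximal, `(rₙ)` is an increasing cofinal sequence in `ω`,
and `ωₙ ∈ Ω` with `rₙ ∈ ωₙ` for all `n`, then `ωₙ → ω` in `Ω`. -/
theorem stmt16 [Countable G] (P : Set G) (hQ : IsQLO P)
    (fl : G → Bool) (hfl : IsDH P fl)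
    (hmax : ∀ ρ : G → Bool, IsDH P ρ → (∀ a, fl a = true → ρ a = true) → fl = ρ)
    (r : ℕ → G) (hrω : ∀ n, fl (r n) = true)
    (hmono : ∀ n, qle P (r n) (r (n + 1)))
    (hcof : ∀ q, fl q = true → ∃ n, qle P q (r n))
    (f : ℕ → (G → Bool)) (hfDH : ∀ n, IsDH P (f n))
    (hrn : ∀ n, f n (r n) = true) :
    Filter.Tendsto f Filter.atTop (nhds fl) := by
  classical
  obtain ⟨hPmul, hPone, hPinv, hPlub⟩ := hQ
  have qtrans : ∀ a b c : G, qle P a b → qle P b c → qle P a c := by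
    intro a b c h1 h2
    have := hPmul _ h1 _ h2
    simpa [qle, mul_assoc] using this
  have qrefl : ∀ a : G, qle P a a := by
    intro a; simp [qle, hPone]
  have hmono' : ∀ m n : ℕ, m ≤ n → qle P (r m) (r n) := by
    intro m n hmn
    induction n with
    | zero =>
      have : m = 0 := Nat.le_zero.mp hmn
      subst this; exact qrefl _
    | succ k ih =>
      rcases Nat.lt_or_ge m (k+1) with h | h
      · exact qtrans _ _ _ (ih (Nat.lt_succ_iff.mp h)) (hmono k)
      · have : m = k+1 := le_antisymm hmn h
        subst this; exact qrefl _
  rw [tendsto_pi_nhds]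
  intro g
  apply tendsto_nhds_of_eventually_eq
  by_cases hg : fl g = true
  · obtain ⟨N, hN⟩ := hcof g hg
    filter_upwards [Filter.eventually_ge_atTop N] with n hn
    have hgrn : qle P g (r n) := qtrans _ _ _ hN (hmono' N n hn)
    have : g ∈ memSet (f n) := (hfDH n).2 g (r n) (hrn n) hgrn
    rw [show f n g = true from this, hg]
  · by_contra hcon
    rw [Filter.not_eventually] at hcon
    have hfreq : ∀ N : ℕ, ∃ n, N ≤ n ∧ f n g = true := by
      intro N
      obtain ⟨n, hn1, hn2⟩ := Filter.frequently_atTop.mp hcon N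
      refine ⟨n, hn1, ?_⟩
      have hflg : fl g = false := (Bool.not_eq_true _).mp hg
      cases h : f n g with
      | true => rfl
      | false => exact absurd (h.trans hflg.symm) hn2
    have hub : ∀ p, fl p = true → ∃ m, qlub P g p m := by
      intro p hp
      obtain ⟨N, hN⟩ := hcof p hp
      obtain ⟨n, hn, hfn⟩ := hfreq N
      obtain ⟨m, hm, hlub⟩ := (hfDH n).1 g hfn (r n) (hrn n)
      have hpm : qle P p m := qtrans _ _ _ (qtrans _ _ _ hN (hmono' N n hn)) hlub.2.1
      exact hPlub g p ⟨m, hlub.1, hpm⟩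
    set ρ : G → Bool := fun a => decide (∃ p m, fl p = true ∧ qlub P g p m ∧ qle P a m) with hρdef
    have hρ : ∀ a, ρ a = true ↔ ∃ p m, fl p = true ∧ qlub P g p m ∧ qle P a m := by
      intro a; simp [hρdef]
    have hρDH : IsDH P ρ := by
      constructor
      · intro a ha b hb
        obtain ⟨p1, m1, hp1, hm1, ham1⟩ := (hρ a).mp ha
        obtain ⟨p2, m2, hp2, hm2, hbm2⟩ := (hρ b).mp hb
        obtain ⟨w, hw, hwlub⟩ := hfl.1 p1 hp1 p2 hp2
        obtain ⟨mw, hmw⟩ := hub w hw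
        have h1 : qle P m1 mw := hm1.2.2 mw hmw.1 (qtrans _ _ _ hwlub.1 hmw.2.1)
        have h2 : qle P m2 mw := hm2.2.2 mw hmw.1 (qtrans _ _ _ hwlub.2.1 hmw.2.1)
        have hamw : qle P a mw := qtrans _ _ _ ham1 h1
        have hbmw : qle P b mw := qtrans _ _ _ hbm2 h2
        obtain ⟨m, hm⟩ := hPlub a b ⟨mw, hamw, hbmw⟩
        refine ⟨m, ?_, hm⟩
        exact (hρ m).mpr ⟨w, mw, hw, hmw, hm.2.2 mw hamw hbmw⟩
      · intro a b hb hab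
        obtain ⟨p, m, hp, hm, hbm⟩ := (hρ b).mp hb
        exact (hρ a).mpr ⟨p, m, hp, hm, qtrans _ _ _ hab hbm⟩
    have hsub : ∀ a, fl a = true → ρ a = true := by
      intro a ha
      obtain ⟨m, hm⟩ := hub a ha
      exact (hρ a).mpr ⟨a, m, ha, hm, hm.2.1⟩
    have hρg : ρ g = true := by
      obtain ⟨m, hm⟩ := hub (r 0) (hrω 0)
      exact (hρ g).mpr ⟨r 0, m, hrω 0, hm, hm.1⟩
    have := hmax ρ hρDH hsub
    rw [this] at hg
    exact hg hρg
end
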